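/- Let ε ∈ (0,1), δ ∈ (0,1), Δ > 0, and set σ = Δ · √(2 ln(1.25/δ)) / ε. Let a, b ∈ ℝ with |a − b| ≤ Δ. Then the one-dimensional Gaussian mechanism satisfies (ε, δ)-indistinguishability: for every Borel set S ⊆ ℝ, (N(a, σ²))(S) ≤ e^ε · (N(b, σ²))(S) + δ, where N(μ, σ²) denotes the Gaussian probability measure on ℝ with mean μ and variance σ². -/

import Mathlib

/-!
The density ratio of `N(a, σ²)` to `N(b, σ²)` at `x` is `exp (((x - b)² - (x - a)²) / (2σ²))`,
and `(x - b)² - (x - a)²` is affine in `x` with slope `2 (a - b)`. With `u = ±1` the sign of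
`a - b`, the ratio is therefore at most `e^ε` outside the half-line `H = {x | u (x - a) > σ τ}`,
where `τ = K - ε / (2K)` and `K = σ ε / Δ = √(2 log (1.25 / δ))`. Hence
`N(a, σ²)(S) ≤ e^ε N(b, σ²)(S) + P(Z > τ)` for a standard normal `Z`. Finally `P(Z ≥ τ) ≤ δ`:
for `τ ≥ 0` by `P(Z ≥ τ) ≤ e^{-τ²/2} / 2`, and for `τ < 0`, which forces `δ ≥ 15/16`, by
`P(Z ≥ τ) ≤ 1/2 + |τ| / √(2π)`.
-/

open MeasureTheory ProbabilityTheory Real Set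
open scoped ENNReal NNReal

theorem MeasureTheory.withDensity_apply_le_mul_of_forall_le {α : Type*} [MeasurableSpace α]
    {μ : Measure α} [SFinite μ] {f g : α → ℝ≥0∞} (hg : Measurable g) {c : ℝ≥0∞} {s : Set α}
    (hfg : ∀ x ∈ s, f x ≤ c * g x) :
    μ.withDensity f s ≤ c * μ.withDensity g s := by
  rw [withDensity_apply', withDensity_apply', ← lintegral_const_mul _ hg]
  exact setLIntegral_mono (hg.const_mul c) hfg

namespace ProbabilityTheory

lemma gaussianPDF_le_exp_mul_gaussianPDF {a b r x : ℝ} {v : ℝ≥0}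
    (h : (x - b) ^ 2 - (x - a) ^ 2 ≤ 2 * v * r) :
    gaussianPDF a v x ≤ ENNReal.ofReal (exp r) * gaussianPDF b v x := by
  rw [gaussianPDF, gaussianPDF, ← ENNReal.ofReal_mul (exp_nonneg r)]
  refine ENNReal.ofReal_le_ofReal ?_
  rcases eq_or_ne v 0 with rfl | hv_ne
  · simp
  have hv : (0 : ℝ) < v := by positivity
  have hexp : -(x - a) ^ 2 / (2 * v) ≤ r + -(x - b) ^ 2 / (2 * v) := by
    have hsplit : r + -(x - b) ^ 2 / (2 * v) - -(x - a) ^ 2 / (2 * v)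
        = (2 * v * r - ((x - b) ^ 2 - (x - a) ^ 2)) / (2 * v) := by
      field_simp
      ring
    rw [← sub_nonneg, hsplit]
    exact div_nonneg (sub_nonneg.2 h) (by positivity)
  calc gaussianPDFReal a v x
      ≤ (√(2 * π * v))⁻¹ * (exp r * exp (-(x - b) ^ 2 / (2 * v))) := by
        rw [gaussianPDFReal, ← exp_add]; gcongr
    _ = exp r * gaussianPDFReal b v x := by rw [gaussianPDFReal]; ring

lemma gaussianReal_apply_le_exp_mul {a b r : ℝ} {v : ℝ≥0} (hv : v ≠ 0) {s : Set ℝ}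
    (h : ∀ x ∈ s, (x - b) ^ 2 - (x - a) ^ 2 ≤ 2 * v * r) :
    gaussianReal a v s ≤ ENNReal.ofReal (exp r) * gaussianReal b v s := by
  rw [gaussianReal_of_var_ne_zero a hv, gaussianReal_of_var_ne_zero b hv]
  exact withDensity_apply_le_mul_of_forall_le (measurable_gaussianPDF b v)
    fun x hx ↦ gaussianPDF_le_exp_mul_gaussianPDF (h x hx)

lemma gaussianReal_Ici_self (m : ℝ) {v : ℝ≥0} (hv : v ≠ 0) : gaussianReal m v (Ici m) = 2⁻¹ := by
  have := nullSingletonClass_gaussianReal (μ := m) hv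
  have hsymm : gaussianReal m v (Iic m) = gaussianReal m v (Ici m) := by
    have hmap := gaussianReal_map_const_sub (μ := m) (v := v) (2 * m)
    rw [show 2 * m - m = m by ring] at hmap
    conv_rhs => rw [← hmap, Measure.map_apply (by fun_prop) measurableSet_Ici]
    congr 1
    ext x
    simp only [mem_Iic, mem_preimage, mem_Ici]
    constructor <;> intro h <;> linarith
  have hsum := measure_union_add_inter (μ := gaussianReal m v) (Iic m) (measurableSet_Ici (a := m))
  rw [Iic_union_Ici, Iic_inter_Ici, Icc_self, measure_singleton, measure_univ, add_zero, hsymm,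
    ← two_mul, mul_comm] at hsum
  exact ENNReal.eq_inv_of_mul_eq_one_left hsum.symm

lemma gaussianPDFReal_le (μ : ℝ) (v : ℝ≥0) (x : ℝ) :
    gaussianPDFReal μ v x ≤ (√(2 * π * v))⁻¹ := by
  rw [gaussianPDFReal]
  refine mul_le_of_le_one_right (by positivity) (exp_le_one_iff.2 ?_)
  exact div_nonpos_of_nonpos_of_nonneg (neg_nonpos.2 (sq_nonneg _)) (by positivity)

lemma gaussianReal_apply_le_mul_volume (μ : ℝ) {v : ℝ≥0} (hv : v ≠ 0) (s : Set ℝ) :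
    gaussianReal μ v s ≤ ENNReal.ofReal (√(2 * π * v))⁻¹ * volume s := by
  rw [gaussianReal_of_var_ne_zero μ hv]
  conv_rhs => rw [← withDensity_one (μ := volume)]
  exact withDensity_apply_le_mul_of_forall_le measurable_one fun x _ ↦ by
    simpa [gaussianPDF] using ENNReal.ofReal_le_ofReal (gaussianPDFReal_le μ v x)

lemma gaussianReal_Ici_le_exp {t : ℝ} (ht : 0 ≤ t) :
    gaussianReal 0 1 (Ici t) ≤ ENNReal.ofReal (exp (-t ^ 2 / 2) / 2) := by
  have hshift : ∀ x ∈ Ici t, (x - t) ^ 2 - (x - 0) ^ 2 ≤ 2 * (1 : ℝ≥0) * (-t ^ 2 / 2) := by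
    intro x (hx : t ≤ x)
    push_cast
    nlinarith
  calc gaussianReal 0 1 (Ici t) ≤ ENNReal.ofReal (exp (-t ^ 2 / 2)) * gaussianReal t 1 (Ici t) :=
        gaussianReal_apply_le_exp_mul one_ne_zero hshift
    _ = ENNReal.ofReal (exp (-t ^ 2 / 2) / 2) := by
        rw [gaussianReal_Ici_self t one_ne_zero, ENNReal.ofReal_div_of_pos two_pos,
          ENNReal.ofReal_ofNat, ENNReal.div_eq_inv_mul, mul_comm]

lemma gaussianReal_Ici_le_half_add {t : ℝ} (ht : t ≤ 0) :
    gaussianReal 0 1 (Ici t) ≤ ENNReal.ofReal (1 / 2 + -t / √(2 * π)) := by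
  calc gaussianReal 0 1 (Ici t) ≤ gaussianReal 0 1 (Ico t 0) + gaussianReal 0 1 (Ici 0) := by
        rw [← Ico_union_Ici_eq_Ici ht]
        exact measure_union_le _ _
    _ ≤ ENNReal.ofReal (√(2 * π))⁻¹ * volume (Ico t 0) + 2⁻¹ := by
        rw [gaussianReal_Ici_self 0 one_ne_zero]
        gcongr
        simpa using gaussianReal_apply_le_mul_volume 0 one_ne_zero (Ico t 0)
    _ = ENNReal.ofReal (1 / 2 + -t / √(2 * π)) := by
        rw [Real.volume_Ico, ← ENNReal.ofReal_mul (by positivity), add_comm,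
          ENNReal.ofReal_add (by norm_num) (div_nonneg (by linarith) (by positivity))]
        congr 1
        · rw [one_div, ENNReal.ofReal_inv_of_pos two_pos, ENNReal.ofReal_ofNat]
        · congr 1; ring

lemma gaussianReal_map_mul_sub_self (a k : ℝ) (v : ℝ≥0) :
    (gaussianReal a v).map (fun x ↦ k * (x - a))
      = gaussianReal 0 (.mk (k ^ 2) (sq_nonneg k) * v) := by
  have : (fun x ↦ k * (x - a)) = (k * ·) ∘ (· - a) := rfl
  rw [this, ← Measure.map_map (by fun_prop) (by fun_prop), gaussianReal_map_sub_const, sub_self,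
    gaussianReal_map_const_mul, mul_zero]

end ProbabilityTheory

lemma exp_neg_sq_div_two_div_two_le {ε δ K : ℝ} (hε : ε < 1) (hδ : 0 < δ) (hK : 0 < K)
    (hK2 : K ^ 2 = 2 * log (1.25 / δ)) : exp (-(K - ε / (2 * K)) ^ 2 / 2) / 2 ≤ δ := by
  have hsq : K ^ 2 - ε ≤ (K - ε / (2 * K)) ^ 2 := by
    have : (K - ε / (2 * K)) ^ 2 = K ^ 2 - ε + (ε / (2 * K)) ^ 2 := by field_simp; ring
    nlinarith [sq_nonneg (ε / (2 * K))]
  have hexp_half : exp (1 / 2) ≤ 5 / 2 := by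
    have : exp (1 / 2) ^ 2 = exp 1 := by rw [← exp_nat_mul]; norm_num
    nlinarith [exp_one_lt_d9, exp_pos (1 / 2)]
  calc exp (-(K - ε / (2 * K)) ^ 2 / 2) / 2 ≤ exp (1 / 2 + -log (1.25 / δ)) / 2 := by
        gcongr
        linarith
    _ = exp (1 / 2) * (2 / 5) * δ := by
        rw [exp_add, exp_neg, exp_log (by positivity)]
        field_simp
        norm_num
    _ ≤ δ := by nlinarith

lemma half_add_div_sqrt_two_pi_le {ε δ K : ℝ} (hε : ε < 1) (hδ : δ ∈ Ioo 0 1) (hK : 0 < K)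
    (hK2 : K ^ 2 = 2 * log (1.25 / δ)) (hτ : K - ε / (2 * K) < 0) :
    1 / 2 + -(K - ε / (2 * K)) / √(2 * π) ≤ δ := by
  obtain ⟨hδ0, hδ1⟩ := hδ
  have hL_lower : 1 / 5 < log (1.25 / δ) := by
    have := one_sub_inv_le_log_of_pos (show 0 < 1.25 / δ by positivity)
    rw [inv_div] at this
    norm_num at this ⊢
    linarith
  have hL_upper : log (1.25 / δ) < 1 / 4 := by
    have := sub_neg.1 hτ
    rw [lt_div_iff₀ (by positivity)] at this
    nlinarith
  have hδ_lower : 15 / 16 ≤ δ := by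
    have hδ_eq : δ = 1.25 * exp (-log (1.25 / δ)) := by
      rw [exp_neg, exp_log (by positivity)]
      field_simp
    nlinarith [add_one_le_exp (-log (1.25 / δ))]
  have hK_sqrt : 8 / 7 ≤ K * √(2 * π) := by
    rw [← sqrt_sq hK.le, ← sqrt_mul (sq_nonneg K)]
    refine le_sqrt_of_sq_le ?_
    nlinarith [pi_gt_three]
  have hτ_neg : -(K - ε / (2 * K)) ≤ 1 / (2 * K) := by
    have : ε / (2 * K) ≤ 1 / (2 * K) := by gcongr
    linarith
  have hinv : 1 / (2 * K) / √(2 * π) ≤ 7 / 16 := by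
    rw [div_div, div_le_iff₀ (by positivity)]
    linarith
  calc 1 / 2 + -(K - ε / (2 * K)) / √(2 * π) ≤ 1 / 2 + 1 / (2 * K) / √(2 * π) := by gcongr
    _ ≤ δ := by linarith

lemma sq_sub_sq_le_of_mul_sub_le {a b x u t Δ : ℝ} (hΔ : 0 < Δ) (ht : 0 ≤ t)
    (hu : u ^ 2 = 1) (hsign : a - b = u * |a - b|) (hab : |a - b| ≤ Δ)
    (hx : u * (x - a) ≤ t / Δ - Δ / 2) :
    (x - b) ^ 2 - (x - a) ^ 2 ≤ 2 * t := by
  set d := |a - b|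
  have hd : 0 ≤ d := abs_nonneg _
  have hexpand : (x - b) ^ 2 - (x - a) ^ 2 = 2 * d * (u * (x - a)) + d ^ 2 := by
    have : x - b = (x - a) + u * d := by linarith
    rw [this]; linear_combination d ^ 2 * hu
  have hfrac : t / Δ * d ≤ t := by
    rw [div_mul_eq_mul_div, div_le_iff₀ hΔ]; exact mul_le_mul_of_nonneg_left hab ht
  nlinarith [mul_le_mul_of_nonneg_left hx (by positivity : 0 ≤ 2 * d)]

lemma gaussianReal_Ici_le_of_sq_eq_two_log {ε δ K : ℝ} (hε : ε < 1) (hδ : δ ∈ Ioo 0 1) (hK : 0 < K)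
    (hK2 : K ^ 2 = 2 * log (1.25 / δ)) :
    gaussianReal 0 1 (Ici (K - ε / (2 * K))) ≤ ENNReal.ofReal δ := by
  rcases le_or_gt 0 (K - ε / (2 * K)) with hτ | hτ
  · exact (gaussianReal_Ici_le_exp hτ).trans
      (ENNReal.ofReal_le_ofReal (exp_neg_sq_div_two_div_two_le hε hδ.1 hK hK2))
  · exact (gaussianReal_Ici_le_half_add hτ.le).trans
      (ENNReal.ofReal_le_ofReal (half_add_div_sqrt_two_pi_le hε hδ hK hK2 hτ))

lemma gaussianReal_le_exp_mul_add_gaussianReal_Ioi {a b σ ε Δ : ℝ} (hσ : 0 < σ) (hε : 0 ≤ ε)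
    (hΔ : 0 < Δ) (hab : |a - b| ≤ Δ) (S : Set ℝ) :
    gaussianReal a (σ ^ 2).toNNReal S
      ≤ ENNReal.ofReal (exp ε) * gaussianReal b (σ ^ 2).toNNReal S
        + gaussianReal 0 1 (Ioi (σ * ε / Δ - Δ / (2 * σ))) := by
  obtain ⟨u, hu, hsign⟩ : ∃ u : ℝ, u ^ 2 = 1 ∧ a - b = u * |a - b| := by
    rcases abs_choice (a - b) with h | h
    · exact ⟨1, by norm_num, by rw [h, one_mul]⟩
    · exact ⟨-1, by norm_num, by rw [h]; ring⟩
  set v := (σ ^ 2).toNNReal with hv_def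
  have hv : (v : ℝ) = σ ^ 2 := Real.coe_toNNReal _ (sq_nonneg σ)
  set H := (fun x ↦ u / σ * (x - a)) ⁻¹' Ioi (σ * ε / Δ - Δ / (2 * σ))
  have hH : gaussianReal a v H = gaussianReal 0 1 (Ioi (σ * ε / Δ - Δ / (2 * σ))) := by
    have hstd : (gaussianReal a v).map (fun x ↦ u / σ * (x - a)) = gaussianReal 0 1 := by
      rw [gaussianReal_map_mul_sub_self]
      congr
      ext
      simp [hv, div_pow, hu, hσ.ne']
    rw [← hstd, Measure.map_apply (by fun_prop) measurableSet_Ioi]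
  have hSH : gaussianReal a v (S \ H) ≤ ENNReal.ofReal (exp ε) * gaussianReal b v S := by
    have hv0 : v ≠ 0 := by simpa [hv_def] using hσ.ne'
    refine (gaussianReal_apply_le_exp_mul hv0 fun x hx ↦ ?_).trans (by gcongr; exact sdiff_subset)
    have hx : u / σ * (x - a) ≤ σ * ε / Δ - Δ / (2 * σ) := not_lt.1 hx.2
    rw [div_mul_eq_mul_div, div_le_iff₀ hσ] at hx
    have hx' : u * (x - a) ≤ σ ^ 2 * ε / Δ - Δ / 2 := hx.trans_eq (by field_simp)
    rw [hv, mul_assoc]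
    exact sq_sub_sq_le_of_mul_sub_le hΔ (by positivity) hu hsign hab hx'
  calc gaussianReal a v S ≤ gaussianReal a v (S ∩ H) + gaussianReal a v (S \ H) :=
        measure_le_inter_add_sdiff _ S H
    _ ≤ gaussianReal a v H + ENNReal.ofReal (exp ε) * gaussianReal b v S :=
        add_le_add (measure_mono inter_subset_right) hSH
    _ = _ := by rw [hH, add_comm]

/-- **The one-dimensional Gaussian mechanism is `(ε, δ)`-indistinguishable.** For
`ε, δ ∈ (0,1)`, sensitivity `Δ > 0`, noise scale `σ = Δ√(2 ln(1.25/δ))/ε`, and any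
`a, b` with `|a − b| ≤ Δ`, the Gaussian measures `N(a, σ²)` and `N(b, σ²)` satisfy
`N(a,σ²)(S) ≤ e^ε N(b,σ²)(S) + δ` for every Borel set `S`. -/
theorem gaussian_mechanism_indistinguishable
    (ε δ Δ : ℝ) (hε : ε ∈ Set.Ioo (0 : ℝ) 1) (hδ : δ ∈ Set.Ioo (0 : ℝ) 1)
    (hΔ : 0 < Δ)
    (σ : ℝ) (hσ : σ = Δ * Real.sqrt (2 * Real.log (1.25 / δ)) / ε)
    (a b : ℝ) (hab : |a - b| ≤ Δ) :
    ∀ S : Set ℝ, MeasurableSet S →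
      gaussianReal a (Real.toNNReal (σ ^ 2)) S
        ≤ ENNReal.ofReal (Real.exp ε) * gaussianReal b (Real.toNNReal (σ ^ 2)) S
          + ENNReal.ofReal δ := by
  intro S _
  obtain ⟨hε0, hε1⟩ := hε
  have hlog : 0 < log (1.25 / δ) := log_pos ((one_lt_div hδ.1).2 (by linarith [hδ.2]))
  have hσ0 : 0 < σ := by rw [hσ]; positivity
  set K := σ * ε / Δ with hK_def
  have hK : 0 < K := by positivity
  have hK_sqrt : K = √(2 * log (1.25 / δ)) := by rw [hK_def, hσ]; field_simp
  have hK2 : K ^ 2 = 2 * log (1.25 / δ) := by rw [hK_sqrt, sq_sqrt (by positivity)]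
  have hτ : σ * ε / Δ - Δ / (2 * σ) = K - ε / (2 * K) := by rw [hK_def]; field_simp
  calc gaussianReal a (σ ^ 2).toNNReal S
      ≤ ENNReal.ofReal (exp ε) * gaussianReal b (σ ^ 2).toNNReal S
        + gaussianReal 0 1 (Ioi (K - ε / (2 * K))) := by
        simpa only [hτ] using gaussianReal_le_exp_mul_add_gaussianReal_Ioi hσ0 hε0.le hΔ hab S
    _ ≤ ENNReal.ofReal (exp ε) * gaussianReal b (σ ^ 2).toNNReal S + ENNReal.ofReal δ := by
        gcongr
        exact (measure_mono Ioi_subset_Ici_self).trans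
          (gaussianReal_Ici_le_of_sq_eq_two_log hε1 hδ hK hK2)
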